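/- Let G and H be simple graphs with δ(G) ≥ 2 and δ(H) ≥ 2. If G and H each contain at least one triangle, then Cc(G × H) < Cc(G) · Cc(H) (strict inequality). -/

import Mathlib

variable {α β : Type*}

/-- Tensor (categorical) product of simple graphs. -/
def tensorProdG (G : SimpleGraph α) (H : SimpleGraph β) : SimpleGraph (α × β) where
  Adj x y := G.Adj x.1 y.1 ∧ H.Adj x.2 y.2
  symm := ⟨fun _ _ h => ⟨h.1.symm, h.2.symm⟩⟩
  loopless := ⟨fun x h => G.loopless.irrefl x.1 h.1⟩

instance (G : SimpleGraph α) (H : SimpleGraph β) [DecidableRel G.Adj] [DecidableRel H.Adj] :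
    DecidableRel (tensorProdG G H).Adj := fun x y => inferInstanceAs (Decidable (G.Adj x.1 y.1 ∧ H.Adj x.2 y.2))

/-- Number of triangles incident to `u`: edges of the induced neighborhood. -/
noncomputable def triCount (G : SimpleGraph α) [Fintype α] (u : α) : ℕ :=
  Nat.card (SimpleGraph.induce (G.neighborSet u) G).edgeSet

/-- Local clustering coefficient. -/
noncomputable def locCc (G : SimpleGraph α) [Fintype α] [DecidableRel G.Adj] (u : α) : ℝ :=
  if 2 ≤ G.degree u then (triCount G u : ℝ) / ((G.degree u).choose 2) else 0

/-- Global clustering coefficient. -/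
noncomputable def globCc (G : SimpleGraph α) [Fintype α] [DecidableRel G.Adj] : ℝ :=
  (∑ v, locCc G v) / (Fintype.card α)

/-- Minimum degree of the induced neighborhood of `u`. -/
noncomputable def nbrMinDeg (G : SimpleGraph α) [Fintype α] [DecidableRel G.Adj] (u : α) : ℕ :=
  (SimpleGraph.induce (G.neighborSet u) G).minDegree

/-- Average degree, as a real number. -/
noncomputable def avgDeg (G : SimpleGraph α) [Fintype α] [DecidableRel G.Adj] : ℝ :=
  (∑ v, (G.degree v : ℝ)) / (Fintype.card α)

/-!
The neighbourhood of `(u, v)` in `G × H` induces the tensor product of the neighbourhoods of `u`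
and `v`, and a tensor product of graphs with `m` and `n` edges has `2mn` edges. Hence
`Cc_{(u,v)}(G × H) = r · Cc_u(G) · Cc_v(H)` with `r = 2 C(d,2) C(e,2) / C(de,2) < 1` for
`d, e ≥ 2`, so the local coefficients are termwise at most the products, strictly so at a pair of
vertices lying on triangles. Averaging over `V(G) × V(H)` gives the strict inequality.
-/

open SimpleGraph

section Tensor

variable [Fintype α] [Fintype β] (A : SimpleGraph α) (B : SimpleGraph β)

lemma tensorProdG_neighborFinset [DecidableRel A.Adj] [DecidableRel B.Adj] (a : α) (b : β) :
    (tensorProdG A B).neighborFinset (a, b) = A.neighborFinset a ×ˢ B.neighborFinset b := by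
  ext ⟨x, y⟩
  simp only [mem_neighborFinset, Finset.mem_product]
  rfl

lemma tensorProdG_degree [DecidableRel A.Adj] [DecidableRel B.Adj] (a : α) (b : β) :
    (tensorProdG A B).degree (a, b) = A.degree a * B.degree b := by
  simp only [← card_neighborFinset_eq_degree, tensorProdG_neighborFinset, Finset.card_product]

lemma card_edgeSet_tensorProdG :
    Nat.card (tensorProdG A B).edgeSet = 2 * (Nat.card A.edgeSet * Nat.card B.edgeSet) := by
  classical
  have hsum : ∑ x, (tensorProdG A B).degree x = (∑ a, A.degree a) * ∑ b, B.degree b := by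
    simp only [Fintype.sum_prod_type, tensorProdG_degree, Finset.sum_mul_sum]
  rw [sum_degrees_eq_twice_card_edges, sum_degrees_eq_twice_card_edges,
    sum_degrees_eq_twice_card_edges] at hsum
  simp only [Nat.card_eq_fintype_card, card_edgeSet]
  linarith

def induceNeighborSetTensorProdGIso (u : α) (v : β) :
    (tensorProdG A B).induce ((tensorProdG A B).neighborSet (u, v)) ≃g
      tensorProdG (A.induce (A.neighborSet u)) (B.induce (B.neighborSet v)) where
  toFun x := (⟨x.1.1, x.2.1⟩, ⟨x.1.2, x.2.2⟩)
  invFun p := ⟨(p.1.1, p.2.1), ⟨p.1.2, p.2.2⟩⟩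
  left_inv _ := rfl
  right_inv _ := rfl
  map_rel_iff' := Iff.rfl

lemma triCount_tensorProdG (u : α) (v : β) :
    triCount (tensorProdG A B) (u, v) = 2 * (triCount A u * triCount B v) := by
  classical
  rw [triCount, Nat.card_congr (induceNeighborSetTensorProdGIso A B u v).mapEdgeSet]
  exact card_edgeSet_tensorProdG _ _

end Tensor

lemma two_mul_choose_two_mul_choose_two_lt {d e : ℕ} (hd : 2 ≤ d) (he : 2 ≤ e) :
    2 * ((d.choose 2 : ℝ) * e.choose 2) < (d * e).choose 2 := by
  have hd' : (2 : ℝ) ≤ d := by exact_mod_cast hd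
  have he' : (2 : ℝ) ≤ e := by exact_mod_cast he
  rw [Nat.cast_choose_two, Nat.cast_choose_two, Nat.cast_choose_two, Nat.cast_mul]
  nlinarith [mul_pos (by linarith : (0 : ℝ) < d) (by linarith : (0 : ℝ) < e)]

section LocalCoefficient

variable [Fintype α] [Fintype β] (A : SimpleGraph α) (B : SimpleGraph β)
  [DecidableRel A.Adj] [DecidableRel B.Adj]

lemma locCc_nonneg (u : α) : 0 ≤ locCc A u := by
  unfold locCc
  split_ifs <;> positivity

lemma locCc_pos {u : α} (hu : 2 ≤ A.degree u) (ht : 0 < triCount A u) : 0 < locCc A u := by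
  rw [locCc, if_pos hu]
  exact div_pos (by exact_mod_cast ht) (by exact_mod_cast Nat.choose_pos hu)

lemma locCc_tensorProdG {u : α} {v : β} (hu : 2 ≤ A.degree u) (hv : 2 ≤ B.degree v) :
    locCc (tensorProdG A B) (u, v) =
      2 * ((A.degree u).choose 2 * (B.degree v).choose 2) / (A.degree u * B.degree v).choose 2 *
        (locCc A u * locCc B v) := by
  have huv : 2 ≤ A.degree u * B.degree v := by nlinarith
  have hcu : ((A.degree u).choose 2 : ℝ) ≠ 0 := by exact_mod_cast (Nat.choose_pos hu).ne'
  have hcv : ((B.degree v).choose 2 : ℝ) ≠ 0 := by exact_mod_cast (Nat.choose_pos hv).ne'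
  rw [locCc, locCc, locCc, tensorProdG_degree, if_pos huv, if_pos hu, if_pos hv,
    triCount_tensorProdG]
  push_cast
  field_simp

lemma locCc_tensorProdG_le {u : α} {v : β} (hu : 2 ≤ A.degree u) (hv : 2 ≤ B.degree v) :
    locCc (tensorProdG A B) (u, v) ≤ locCc A u * locCc B v := by
  rw [locCc_tensorProdG A B hu hv]
  refine mul_le_of_le_one_left (mul_nonneg (locCc_nonneg A u) (locCc_nonneg B v)) ?_
  rw [div_le_one (by exact_mod_cast Nat.choose_pos (by nlinarith))]
  exact (two_mul_choose_two_mul_choose_two_lt hu hv).le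

lemma locCc_tensorProdG_lt {u : α} {v : β} (hu : 2 ≤ A.degree u) (hv : 2 ≤ B.degree v)
    (htu : 0 < triCount A u) (htv : 0 < triCount B v) :
    locCc (tensorProdG A B) (u, v) < locCc A u * locCc B v := by
  rw [locCc_tensorProdG A B hu hv]
  refine mul_lt_of_lt_one_left (mul_pos (locCc_pos A hu htu) (locCc_pos B hv htv)) ?_
  rw [div_lt_one (by exact_mod_cast Nat.choose_pos (by nlinarith))]
  exact two_mul_choose_two_mul_choose_two_lt hu hv

end LocalCoefficient

lemma exists_triCount_pos_of_not_cliqueFree [Fintype α] {A : SimpleGraph α}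
    (h : ¬ A.CliqueFree 3) : ∃ u, 0 < triCount A u := by
  classical
  obtain ⟨s, hs⟩ := not_forall.mp h
  obtain ⟨a, b, c, hab, hac, hbc, -⟩ := is3Clique_iff.mp (not_not.mp hs)
  have : Nonempty (A.induce (A.neighborSet a)).edgeSet := ⟨⟨s(⟨b, hab⟩, ⟨c, hac⟩), hbc⟩⟩
  exact ⟨a, Nat.card_pos⟩

variable [Fintype α] [Fintype β] (G : SimpleGraph α) (H : SimpleGraph β)
  [DecidableRel G.Adj] [DecidableRel H.Adj]

theorem tensor_globCc_lt (hG : ∀ u : α, 2 ≤ G.degree u) (hH : ∀ v : β, 2 ≤ H.degree v)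
    (htG : ¬ G.CliqueFree 3) (htH : ¬ H.CliqueFree 3) :
    globCc (tensorProdG G H) < globCc G * globCc H := by
  obtain ⟨u₀, hu₀⟩ := exists_triCount_pos_of_not_cliqueFree htG
  obtain ⟨v₀, hv₀⟩ := exists_triCount_pos_of_not_cliqueFree htH
  have hsum : ∑ x : α × β, locCc (tensorProdG G H) x
      < (∑ u, locCc G u) * (∑ v, locCc H v) := by
    rw [Finset.sum_mul_sum, ← Finset.sum_product', Finset.univ_product_univ]
    refine Finset.sum_lt_sum (fun x _ => locCc_tensorProdG_le G H (hG x.1) (hH x.2))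
      ⟨(u₀, v₀), Finset.mem_univ _, locCc_tensorProdG_lt G H (hG u₀) (hH v₀) hu₀ hv₀⟩
  have hcard : (0 : ℝ) < Fintype.card (α × β) := by
    exact_mod_cast Fintype.card_pos_iff.mpr ⟨(u₀, v₀)⟩
  rw [globCc, globCc, globCc, div_mul_div_comm, ← Nat.cast_mul, ← Fintype.card_prod]
  exact div_lt_div_of_pos_right hsum hcard
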